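/- In the commutative ring R = Z[u,v,t,x]/⟨tx² = tx − x, ux = tx, vx = tx⟩, the elements u^p v^q t^i (for p,q,i ≥ 0), t^i x (for i ≥ 0), and x^i (for i ≥ 2) form a Z-linear basis of R. -/

import Mathlib

/-!
Spanning: modulo the relations, `u x = t x` and `v x = t x` turn every monomial containing `x`
into some `t^k x^(j+1)`, and `t^(k+1) x^(j+2) = t^(k+1) x^(j+1) - t^k x^(j+1)` lowers the power of
`x` until it is `1` or the power of `t` is `0`.

Independence: the same rewriting defines a `ℤ`-linear normal form map from `ℤ[u,v,t,x]` to the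
free `ℤ`-module on the index set. It kills every multiple of each relation, hence the ideal, so it
descends to `R`, where it sends the family to the standard basis.
-/

noncomputable section
open MvPolynomial

/-- The variables `u, v, t, x` of `ℤ[u,v,t,x]`. -/
abbrev uP : MvPolynomial (Fin 4) ℤ := X 0
abbrev vP : MvPolynomial (Fin 4) ℤ := X 1
abbrev tP : MvPolynomial (Fin 4) ℤ := X 2
abbrev xP : MvPolynomial (Fin 4) ℤ := X 3

/-- The ideal of relations `tx² = tx − x`, `ux = tx`, `vx = tx`. -/
def relIdeal : Ideal (MvPolynomial (Fin 4) ℤ) :=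
  Ideal.span {tP * xP ^ 2 - (tP * xP - xP), uP * xP - tP * xP, vP * xP - tP * xP}

/-- The ring `R = ℤ[u,v,t,x]/⟨tx² = tx − x, ux = tx, vx = tx⟩`. -/
abbrev RRing : Type := MvPolynomial (Fin 4) ℤ ⧸ relIdeal

/-- The quotient map `ℤ[u,v,t,x] → R`. -/
def mkR : MvPolynomial (Fin 4) ℤ →+* RRing := Ideal.Quotient.mk relIdeal

/-- The claimed basis family: `u^p v^q t^i` for `p,q,i ≥ 0`, `t^i x` for `i ≥ 0`,
and `x^i` for `i ≥ 2`. -/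
def basFam : ((ℕ × ℕ × ℕ) ⊕ ℕ ⊕ {i : ℕ // 2 ≤ i}) → RRing
  | .inl (p, q, i) => mkR (uP ^ p * vP ^ q * tP ^ i)
  | .inr (.inl i) => mkR (tP ^ i * xP)
  | .inr (.inr i) => mkR (xP ^ (i : ℕ))

theorem pow_mul_eq_pow_mul_of_mul_eq {A : Type*} [CommRing A] {a b c : A} (h : b * a = c * a)
    (n : ℕ) : b ^ n * a = c ^ n * a := by
  obtain ⟨q, hq⟩ := sub_dvd_pow_sub_pow b c n
  rw [← sub_eq_zero, ← sub_mul, hq, mul_comm (b - c), mul_assoc, sub_mul, h, sub_self, mul_zero]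

theorem AddMonoidHom.map_eq_zero_of_mem_ideal_span {A M : Type*} [CommSemiring A]
    [AddCommMonoid M] (T : A →+ M) {S : Set A} (hS : ∀ s ∈ S, ∀ a, T (a * s) = 0) {f : A}
    (hf : f ∈ Ideal.span S) : T f = 0 := by
  suffices ∀ a, T (a * f) = 0 by simpa using this 1
  induction hf using Submodule.span_induction with
  | mem s hs => exact hS s hs
  | zero => simp
  | add f g _ _ hf hg => intro a; rw [mul_add, map_add, hf, hg, add_zero]
  | smul c f _ hf => intro a; rw [smul_eq_mul, ← mul_assoc]; exact hf _

theorem MvPolynomial.map_mul_eq_zero_of_map_monomial_mul {σ R M : Type*} [CommSemiring R]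
    [AddCommMonoid M] (T : MvPolynomial σ R →+ M) {s : MvPolynomial σ R}
    (hs : ∀ d c, T (monomial d c * s) = 0) (a : MvPolynomial σ R) : T (a * s) = 0 := by
  induction a using MvPolynomial.induction_on' with
  | monomial d c => exact hs d c
  | add f g hf hg => rw [add_mul, map_add, hf, hg, add_zero]

theorem mkR_eq_of_sub_mem {f g : MvPolynomial (Fin 4) ℤ} (h : f - g ∈ relIdeal) : mkR f = mkR g :=
  Ideal.Quotient.eq.mpr h

theorem mkR_t_mul_x_sq : mkR tP * mkR xP ^ 2 = mkR tP * mkR xP - mkR xP := by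
  simp only [← map_pow, ← map_mul, ← map_sub]
  exact mkR_eq_of_sub_mem (Ideal.subset_span (by simp))

theorem mkR_u_mul_x : mkR uP * mkR xP = mkR tP * mkR xP := by
  simp only [← map_mul]
  exact mkR_eq_of_sub_mem (Ideal.subset_span (by simp))

theorem mkR_v_mul_x : mkR vP * mkR xP = mkR tP * mkR xP := by
  simp only [← map_mul]
  exact mkR_eq_of_sub_mem (Ideal.subset_span (by simp))

theorem mkR_monomial (d : Fin 4 →₀ ℕ) :
    mkR (monomial d 1) = mkR uP ^ d 0 * mkR vP ^ d 1 * mkR tP ^ d 2 * mkR xP ^ d 3 := by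
  simp [monomial_eq, Finsupp.prod_fintype, Fin.prod_univ_four]

theorem mkR_t_pow_mul_x_pow_mem_span (j k : ℕ) :
    mkR tP ^ k * mkR xP ^ (j + 1) ∈ Submodule.span ℤ (Set.range basFam) := by
  induction j generalizing k with
  | zero => exact Submodule.subset_span ⟨.inr (.inl k), by simp [basFam]⟩
  | succ j ih =>
    cases k with
    | zero => exact Submodule.subset_span ⟨.inr (.inr ⟨j + 2, by omega⟩), by simp [basFam]⟩
    | succ k =>
      have h : mkR tP ^ (k + 1) * mkR xP ^ (j + 2) =
          mkR tP ^ (k + 1) * mkR xP ^ (j + 1) - mkR tP ^ k * mkR xP ^ (j + 1) := by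
        linear_combination mkR tP ^ k * mkR xP ^ j * mkR_t_mul_x_sq
      rw [h]
      exact sub_mem (ih (k + 1)) (ih k)

theorem span_basFam_eq_top : Submodule.span ℤ (Set.range basFam) = ⊤ := by
  refine Submodule.eq_top_iff'.mpr fun r ↦ ?_
  obtain ⟨f, rfl⟩ := Ideal.Quotient.mk_surjective (I := relIdeal) r
  change mkR f ∈ _
  induction f using MvPolynomial.induction_on' with
  | monomial d c =>
    rw [← mul_one c, ← smul_eq_mul, ← smul_monomial, map_zsmul]
    refine Submodule.smul_mem _ c ?_
    rw [mkR_monomial]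
    rcases h : d 3 with _ | j
    · exact Submodule.subset_span ⟨.inl (d 0, d 1, d 2), by simp [basFam]⟩
    · have h : mkR uP ^ d 0 * mkR vP ^ d 1 * mkR tP ^ d 2 * mkR xP ^ (j + 1) =
          mkR tP ^ (d 0 + d 1 + d 2) * mkR xP ^ (j + 1) := by
        linear_combination
          mkR xP ^ j * mkR vP ^ d 1 * mkR tP ^ d 2 * pow_mul_eq_pow_mul_of_mul_eq mkR_u_mul_x (d 0) +
          mkR xP ^ j * mkR tP ^ (d 0 + d 2) * pow_mul_eq_pow_mul_of_mul_eq mkR_v_mul_x (d 1)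
      rw [h]
      exact mkR_t_pow_mul_x_pow_mem_span j _
  | add f g hf hg => rw [map_add]; exact add_mem hf hg

abbrev BasisIndex : Type := (ℕ × ℕ × ℕ) ⊕ ℕ ⊕ {i : ℕ // 2 ≤ i}

/-- Coordinates of `t^k x^(j+1)` in the family `basFam`. -/
def txNormalForm : ℕ → ℕ → BasisIndex →₀ ℤ
  | k, 0 => Finsupp.single (.inr (.inl k)) 1
  | 0, j + 1 => Finsupp.single (.inr (.inr ⟨j + 2, by omega⟩)) 1
  | k + 1, j + 1 => txNormalForm (k + 1) j - txNormalForm k j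

/-- Coordinates of the monomial `u^(d 0) v^(d 1) t^(d 2) x^(d 3)`. -/
def monomialNormalForm (d : Fin 4 →₀ ℕ) : BasisIndex →₀ ℤ :=
  match d 3 with
  | 0 => Finsupp.single (.inl (d 0, d 1, d 2)) 1
  | j + 1 => txNormalForm (d 0 + d 1 + d 2) j

theorem monomialNormalForm_add_single_three (d : Fin 4 →₀ ℕ) :
    monomialNormalForm (d + Finsupp.single 3 1) = txNormalForm (d 0 + d 1 + d 2) (d 3) := by
  simp [monomialNormalForm]

theorem monomialNormalForm_add_single_add_single_three (d : Fin 4 →₀ ℕ) {i : Fin 4}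
    (hi : i ≠ 3) :
    monomialNormalForm (d + Finsupp.single i 1 + Finsupp.single 3 1) =
      txNormalForm (d 0 + d 1 + d 2 + 1) (d 3) := by
  rw [monomialNormalForm_add_single_three]
  fin_cases i <;> simp_all <;> ring_nf

def normalForm : MvPolynomial (Fin 4) ℤ →ₗ[ℤ] BasisIndex →₀ ℤ :=
  (basisMonomials (Fin 4) ℤ).constr ℤ monomialNormalForm

theorem normalForm_monomial (d : Fin 4 →₀ ℕ) (c : ℤ) :
    normalForm (monomial d c) = c • monomialNormalForm d := by
  rw [← mul_one c, ← smul_eq_mul, ← smul_monomial, map_smul, smul_eq_mul, mul_one]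
  congr 1
  exact (basisMonomials (Fin 4) ℤ).constr_basis ℤ monomialNormalForm d

theorem normalForm_monomial_mul_tx_relation (d : Fin 4 →₀ ℕ) (c : ℤ) :
    normalForm (monomial d c * (tP * xP ^ 2 - (tP * xP - xP))) = 0 := by
  have e : monomial d c * (tP * xP ^ 2 - (tP * xP - xP)) =
      monomial (d + Finsupp.single 2 1 + Finsupp.single 3 1 + Finsupp.single 3 1) c -
        (monomial (d + Finsupp.single 2 1 + Finsupp.single 3 1) c -
          monomial (d + Finsupp.single 3 1) c) := by
    simp only [X, pow_two, mul_sub, monomial_mul, mul_one, add_assoc]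
  simp only [e, map_sub, normalForm_monomial, monomialNormalForm_add_single_three,
    Finsupp.coe_add, Pi.add_apply, ne_eq, Fin.reduceEq, not_false_eq_true,
    Finsupp.single_eq_of_ne, add_zero, Finsupp.single_eq_same]
  rw [← add_assoc, txNormalForm, smul_sub, sub_self]

theorem normalForm_monomial_mul_X_mul_x_relation (d : Fin 4 →₀ ℕ) (c : ℤ) {i : Fin 4}
    (hi : i ≠ 3) : normalForm (monomial d c * (X i * xP - tP * xP)) = 0 := by
  have e : monomial d c * (X i * xP - tP * xP) =
      monomial (d + Finsupp.single i 1 + Finsupp.single 3 1) c -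
        monomial (d + Finsupp.single 2 1 + Finsupp.single 3 1) c := by
    simp only [X, mul_sub, monomial_mul, mul_one, add_assoc]
  simp only [e, map_sub, normalForm_monomial,
    monomialNormalForm_add_single_add_single_three d hi,
    monomialNormalForm_add_single_add_single_three d (show (2 : Fin 4) ≠ 3 by decide), sub_self]

theorem normalForm_eq_zero_of_mem {f : MvPolynomial (Fin 4) ℤ} (hf : f ∈ relIdeal) :
    normalForm f = 0 := by
  refine normalForm.toAddMonoidHom.map_eq_zero_of_mem_ideal_span ?_ hf
  rintro s (rfl | rfl | rfl) <;> apply MvPolynomial.map_mul_eq_zero_of_map_monomial_mul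
  exacts [normalForm_monomial_mul_tx_relation,
    (normalForm_monomial_mul_X_mul_x_relation · · (by decide)),
    (normalForm_monomial_mul_X_mul_x_relation · · (by decide))]

def normalFormR : RRing →ₗ[ℤ] BasisIndex →₀ ℤ :=
  (relIdeal.restrictScalars ℤ).liftQ normalForm (fun _ ↦ normalForm_eq_zero_of_mem) ∘ₗ
    (Submodule.Quotient.restrictScalarsEquiv ℤ relIdeal).symm.toLinearMap

theorem normalFormR_mkR (f : MvPolynomial (Fin 4) ℤ) : normalFormR (mkR f) = normalForm f :=
  rfl

theorem normalFormR_basFam (e : BasisIndex) : normalFormR (basFam e) = Finsupp.single e 1 := by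
  rcases e with ⟨p, q, i⟩ | i | ⟨i, hi⟩
  · simp only [basFam, normalFormR_mkR, X_pow_eq_monomial, monomial_mul, normalForm_monomial]
    simp [monomialNormalForm]
  · simp only [basFam, normalFormR_mkR, X_pow_eq_monomial]
    simp only [xP, X, monomial_mul, mul_one, normalForm_monomial, one_smul,
      monomialNormalForm_add_single_three]
    simp [txNormalForm]
  · obtain ⟨j, rfl⟩ : ∃ j, i = j + 2 := ⟨i - 2, by omega⟩
    simp only [basFam, normalFormR_mkR, X_pow_eq_monomial, normalForm_monomial]
    simp [monomialNormalForm, txNormalForm]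

theorem linearIndependent_basFam : LinearIndependent ℤ basFam := by
  refine .of_comp normalFormR ?_
  rw [show normalFormR ∘ basFam = fun e ↦ Finsupp.single e 1 from funext normalFormR_basFam]
  exact Finsupp.linearIndependent_single_one ℤ BasisIndex

theorem basFam_isBasis :
    ∃ b : Module.Basis ((ℕ × ℕ × ℕ) ⊕ ℕ ⊕ {i : ℕ // 2 ≤ i}) ℤ RRing, ∀ i, b i = basFam i :=
  ⟨.mk linearIndependent_basFam span_basFam_eq_top.ge, Module.Basis.mk_apply _ _⟩

end
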